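/- There is no sequence in $[0,1]^d$ that is $\gamma$-uniformly distributed for any $\gamma > 1/2$. -/

import Mathlib

open Finset

/-- Euclidean norm of an integer vector `k ∈ ℤ^d`. -/
noncomputable def intNorm {d : ℕ} (k : Fin d → ℤ) : ℝ :=
  Real.sqrt (∑ i, ((k i : ℝ)) ^ 2)

/-- A sequence `{v_n}` in `[0,1]^d` is `γ`-uniformly distributed if for every `ε > 0`
there is `C_ε > 0` with `|N⁻¹ ∑_{n=1}^N e^{2πi k·v_n}| ≤ C_ε |k|^ε N^{-γ}` for every
nonzero `k ∈ ℤ^d` and every `N ≥ 1`. -/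
def IsGammaUD {d : ℕ} (γ : ℝ) (v : ℕ → Fin d → ℝ) : Prop :=
  ∀ ε : ℝ, 0 < ε → ∃ C : ℝ, 0 < C ∧ ∀ k : Fin d → ℤ, k ≠ 0 → ∀ N : ℕ, 1 ≤ N →
    ‖(N : ℂ)⁻¹ * ∑ n ∈ Finset.range N,
        Complex.exp (2 * Real.pi * Complex.I * (∑ i, (k i : ℝ) * v n i))‖
      ≤ C * intNorm k ^ ε * (N : ℝ) ^ (-γ)

/-!
Write `S_N(k) = ∑_{n<N} e(k·v_n)`. For a finite set `T` of frequencies, expanding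
`∑_{j,j' ∈ T} |S_N(j - j')|²` as `∑_{n,m<N} |∑_{j ∈ T} e(j·(v_n - v_m))|²` and keeping only the
diagonal `n = m` gives `N |T|² ≤ ∑_{j,j' ∈ T} |S_N(j - j')|²`, while the terms `j = j'` contribute
only `|T| N²`. For `T = [0, 2N²)^d` the remaining terms are bounded by `γ`-uniform distribution,
`|S_N(k)| ≪ N^{1-γ+2ε}`, which yields `N ≪ N^{2-2γ+4ε}`: impossible for large `N` once
`γ > 1/2` and `ε < (2γ - 1)/4`.
-/

open ComplexConjugate Filter

theorem sum_normSq_sum_mul_conj_comm {α κ : Type*} (s : Finset α) (t : Finset κ) (f : α → κ → ℂ) :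
    ∑ j ∈ t, ∑ j' ∈ t, Complex.normSq (∑ n ∈ s, f n j * conj (f n j'))
      = ∑ n ∈ s, ∑ m ∈ s, Complex.normSq (∑ j ∈ t, f n j * conj (f m j)) := by
  apply Complex.ofReal_injective
  push_cast [← Complex.mul_conj]
  simp only [map_sum, map_mul, Complex.conj_conj, sum_mul_sum]
  rw [sum_comm]
  simp_rw [sum_comm (s := t) (t := s)]
  refine sum_congr rfl fun n _ => sum_congr rfl fun m _ => ?_
  rw [sum_comm]
  exact sum_congr rfl fun _ _ => sum_congr rfl fun _ _ => by ring

theorem sum_sq_sum_normSq_le {α κ : Type*} (s : Finset α) (t : Finset κ) (f : α → κ → ℂ) :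
    ∑ n ∈ s, (∑ j ∈ t, Complex.normSq (f n j)) ^ 2
      ≤ ∑ j ∈ t, ∑ j' ∈ t, Complex.normSq (∑ n ∈ s, f n j * conj (f n j')) := by
  rw [sum_normSq_sum_mul_conj_comm]
  refine sum_le_sum fun n hn => ?_
  have hdiag : ∑ j ∈ t, f n j * conj (f n j) = ((∑ j ∈ t, Complex.normSq (f n j) : ℝ) : ℂ) := by
    push_cast [Complex.mul_conj]; rfl
  calc (∑ j ∈ t, Complex.normSq (f n j)) ^ 2
      = Complex.normSq (∑ j ∈ t, f n j * conj (f n j)) := by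
        rw [hdiag, Complex.normSq_ofReal, sq]
    _ ≤ _ := single_le_sum (f := fun m => Complex.normSq (∑ j ∈ t, f n j * conj (f m j)))
        (fun _ _ => Complex.normSq_nonneg _) hn

section WeylSums

variable {ι : Type*} [Fintype ι]

noncomputable def torusChar (k : ι → ℤ) (x : ι → ℝ) : ℂ :=
  Complex.exp (2 * Real.pi * Complex.I * (∑ i, (k i : ℝ) * x i))

theorem normSq_torusChar (k : ι → ℤ) (x : ι → ℝ) : Complex.normSq (torusChar k x) = 1 := by
  simp [torusChar, Complex.normSq_eq_norm_sq, Complex.norm_exp]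

theorem torusChar_zero (x : ι → ℝ) : torusChar 0 x = 1 := by
  simp [torusChar]

theorem torusChar_mul_conj (j j' : ι → ℤ) (x : ι → ℝ) :
    torusChar j x * conj (torusChar j' x) = torusChar (j - j') x := by
  rw [torusChar, torusChar, torusChar, ← Complex.exp_conj, ← Complex.exp_add]
  congr 1
  simp only [map_mul, Complex.conj_I, Complex.conj_ofReal, map_ofNat, Pi.sub_apply]
  push_cast [sub_mul, sum_sub_distrib]
  ring

noncomputable def weylSum (v : ℕ → ι → ℝ) (N : ℕ) (k : ι → ℤ) : ℂ :=
  ∑ n ∈ range N, torusChar k (v n)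

theorem weylSum_zero (v : ℕ → ι → ℝ) (N : ℕ) : weylSum v N 0 = N := by
  simp [weylSum, torusChar_zero]

theorem card_sq_mul_le_sum_normSq_weylSum (v : ℕ → ι → ℝ) (N : ℕ) (t : Finset (ι → ℤ)) :
    (N : ℝ) * (#t : ℝ) ^ 2 ≤ ∑ j ∈ t, ∑ j' ∈ t, Complex.normSq (weylSum v N (j - j')) := by
  simpa [normSq_torusChar, weylSum, torusChar_mul_conj] using
    sum_sq_sum_normSq_le (range N) t fun n j => torusChar j (v n)

theorem sum_normSq_weylSum_le (v : ℕ → ι → ℝ) (N : ℕ) (t : Finset (ι → ℤ)) {B : ℝ}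
    (hB : ∀ j ∈ t, ∀ j' ∈ t, j ≠ j' → ‖weylSum v N (j - j')‖ ≤ B) :
    ∑ j ∈ t, ∑ j' ∈ t, Complex.normSq (weylSum v N (j - j'))
      ≤ #t * (N : ℝ) ^ 2 + (#t : ℝ) ^ 2 * B ^ 2 := by
  calc _ ≤ ∑ j ∈ t, ∑ j' ∈ t, ((if j = j' then (N : ℝ) ^ 2 else 0) + B ^ 2) := by
        gcongr with j hj j' hj'
        split_ifs with h
        · subst h
          rw [sub_self, weylSum_zero, Complex.normSq_natCast, sq]
          exact le_add_of_nonneg_right (sq_nonneg B)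
        · rw [Complex.normSq_eq_norm_sq, zero_add]
          exact pow_le_pow_left₀ (norm_nonneg _) (hB j hj j' hj' h) 2
    _ = _ := by simp [sum_add_distrib, sum_ite_eq]; ring

theorem le_two_mul_sq_of_norm_weylSum_le (v : ℕ → ι → ℝ) {N : ℕ} (hN : 1 ≤ N)
    {t : Finset (ι → ℤ)} (ht : 2 * (N : ℝ) ^ 2 ≤ #t) {B : ℝ}
    (hB : ∀ j ∈ t, ∀ j' ∈ t, j ≠ j' → ‖weylSum v N (j - j')‖ ≤ B) :
    (N : ℝ) ≤ 2 * B ^ 2 := by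
  have h := (card_sq_mul_le_sum_normSq_weylSum v N t).trans (sum_normSq_weylSum_le v N t hB)
  have hN1 : (1 : ℝ) ≤ N := by exact_mod_cast hN
  have hQ : (0 : ℝ) < #t := by nlinarith
  have h' : (N : ℝ) * #t ≤ N ^ 2 + #t * B ^ 2 :=
    le_of_mul_le_mul_left (by linarith) hQ
  by_contra! hlt
  nlinarith [mul_lt_mul_of_pos_left hlt hQ]

end WeylSums

theorem IsGammaUD.norm_weylSum_le {d : ℕ} {γ : ℝ} {v : ℕ → Fin d → ℝ} (hv : IsGammaUD γ v)
    {ε : ℝ} (hε : 0 < ε) : ∃ C : ℝ, 0 < C ∧ ∀ k : Fin d → ℤ, k ≠ 0 → ∀ N : ℕ, 1 ≤ N →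
      ‖weylSum v N k‖ ≤ C * intNorm k ^ ε * (N : ℝ) ^ (1 - γ) := by
  obtain ⟨C, hC0, hC⟩ := hv ε hε
  refine ⟨C, hC0, fun k hk N hN => ?_⟩
  have hN0 : (0 : ℝ) < N := by exact_mod_cast hN
  have := hC k hk N hN
  rw [norm_mul, norm_inv, Complex.norm_natCast, inv_mul_le_iff₀ hN0] at this
  rw [sub_eq_add_neg, Real.rpow_add hN0, Real.rpow_one]
  exact this.trans_eq (by ring)

theorem intNorm_le_of_forall_abs_le {d : ℕ} {k : Fin d → ℤ} {M : ℝ} (hM : 0 ≤ M)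
    (hk : ∀ i, |(k i : ℝ)| ≤ M) : intNorm k ≤ M * Real.sqrt d := by
  calc intNorm k ≤ Real.sqrt (∑ _i : Fin d, M ^ 2) :=
        Real.sqrt_le_sqrt <| sum_le_sum fun i _ =>
          sq_le_sq.2 ((hk i).trans_eq (abs_of_nonneg hM).symm)
    _ = M * Real.sqrt d := by simp [Real.sqrt_sq hM, mul_comm]

theorem IsGammaUD.exists_rpow_le {d : ℕ} (hd : 0 < d) {γ : ℝ} {v : ℕ → Fin d → ℝ}
    (hv : IsGammaUD γ v) {ε : ℝ} (hε : 0 < ε) :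
    ∃ C : ℝ, ∀ N : ℕ, 1 ≤ N → (N : ℝ) ^ (2 * γ - 1 - 4 * ε) ≤ C := by
  obtain ⟨C, hC, hweyl⟩ := hv.norm_weylSum_le hε
  set B := C * (2 * Real.sqrt d) ^ ε
  refine ⟨2 * B ^ 2, fun N hN => ?_⟩
  have hN0 : (0 : ℝ) < N := by exact_mod_cast hN
  set K := 2 * N ^ 2
  set t := Fintype.piFinset fun _ : Fin d => Ico (0 : ℤ) K
  have hcard : 2 * (N : ℝ) ^ 2 ≤ #t := by
    simp only [t, Fintype.card_piFinset, Int.card_Ico, sub_zero, Int.toNat_natCast, prod_const,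
      card_univ, Fintype.card_fin]
    exact_mod_cast Nat.le_self_pow hd.ne' K
  have hbound : ∀ j ∈ t, ∀ j' ∈ t, j ≠ j' →
      ‖weylSum v N (j - j')‖ ≤ B * (N : ℝ) ^ (1 - γ + 2 * ε) := by
    intro j hj j' hj' hne
    have hdiff : intNorm (j - j') ≤ 2 * (N : ℝ) ^ 2 * Real.sqrt d := by
      refine intNorm_le_of_forall_abs_le (by positivity) fun i => ?_
      have hji := mem_Ico.1 (Fintype.mem_piFinset.1 hj i)
      have hj'i := mem_Ico.1 (Fintype.mem_piFinset.1 hj' i)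
      rw [abs_le]
      constructor <;> push_cast [Pi.sub_apply] <;> norm_cast <;> omega
    calc ‖weylSum v N (j - j')‖
        ≤ C * intNorm (j - j') ^ ε * (N : ℝ) ^ (1 - γ) := hweyl _ (sub_ne_zero.2 hne) N hN
      _ ≤ C * (2 * Real.sqrt d * (N : ℝ) ^ 2) ^ ε * (N : ℝ) ^ (1 - γ) := by
        gcongr
        · exact Real.sqrt_nonneg _
        · linarith
      _ = B * (N : ℝ) ^ (1 - γ + 2 * ε) := by
        rw [Real.mul_rpow (by positivity) (by positivity), ← Real.rpow_natCast_mul hN0.le,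
          Real.rpow_add hN0]
        push_cast
        ring
  have key := le_two_mul_sq_of_norm_weylSum_le v hN hcard hbound
  rw [mul_pow, ← Real.rpow_mul_natCast hN0.le] at key
  rw [show 2 * γ - 1 - 4 * ε = 1 - (1 - γ + 2 * ε) * (2 : ℕ) by push_cast; ring,
    Real.rpow_sub hN0, Real.rpow_one, div_le_iff₀ (by positivity)]
  linarith

theorem stmt4_general (d : ℕ) (hd : 0 < d) (γ : ℝ) (hγ : 1/2 < γ)
    (v : ℕ → Fin d → ℝ) :
    ¬ IsGammaUD γ v := by
  intro hv
  obtain ⟨C, hC⟩ := hv.exists_rpow_le hd (ε := (2 * γ - 1) / 8) (by linarith)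
  have hgrowth : Tendsto (fun N : ℕ => (N : ℝ) ^ (2 * γ - 1 - 4 * ((2 * γ - 1) / 8)))
      atTop atTop :=
    (tendsto_rpow_atTop (by linarith)).comp tendsto_natCast_atTop_atTop
  obtain ⟨N, hN1, hNC⟩ :=
    ((eventually_ge_atTop 1).and (hgrowth.eventually_gt_atTop C)).exists
  exact (hC N hN1).not_gt hNC

/-- No sequence in `[0,1]^d` is `γ`-uniformly distributed for `γ > 1/2`. -/
theorem stmt4 (d : ℕ) (hd : 0 < d) (γ : ℝ) (hγ : 1/2 < γ)
    (v : ℕ → Fin d → ℝ) (hv : ∀ n, v n ∈ Set.Icc (0 : Fin d → ℝ) 1) :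
    ¬ IsGammaUD γ v :=
  stmt4_general d hd γ hγ v
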